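/- There exists a universal constant C > 0 such that for every probability density p on ℝ with 0 < ‖p − φ‖_∞ ≤ 1/2, one has ‖p − φ‖_1 ≤ C·√(|ln ‖p − φ‖_∞|)·‖p − φ‖_∞, and consequently ‖p − φ‖_2² ≤ ‖p − φ‖_∞·‖p − φ‖_1 ≤ C·√(|ln ‖p − φ‖_∞|)·‖p − φ‖_∞². -/

import Mathlib

/-! Put `ε = ‖p - φ‖_∞` and cut the line at `T = √(2 |ln ε|)`, where the Gaussian tail mass
`2 e^{-T²/2}` equals `2ε`. On `[-T, T]` the difference `|p - φ|` is at most `ε`, which costs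
`2Tε`. Outside, `|p - φ| ≤ p + φ`, and because `p` and `φ` have the same total mass, the mass
of `p` outside `[-T, T]` exceeds that of `φ` by at most `∫_{[-T,T]} |p - φ|`. Hence
`‖p - φ‖₁ ≤ 4Tε + 4ε = O(√|ln ε| ε)`. The `L²` bound is `∫ |f|² ≤ ‖f‖_∞ ∫ |f|`. -/

open MeasureTheory Real Filter
open scoped ENNReal

noncomputable section

/-- The standard Gaussian density on `ℝ`. -/
def gauss (x : ℝ) : ℝ := (Real.sqrt (2 * Real.pi))⁻¹ * Real.exp (-x ^ 2 / 2)

/-- The real-valued `L^q(ℝ)` norm. -/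
def nrm (f : ℝ → ℝ) (q : ℝ≥0∞) : ℝ := (eLpNorm f q volume).toReal

open Set

theorem eLpNorm_two_sq_le_eLpNorm_top_mul_eLpNorm_one {α E : Type*} [MeasurableSpace α]
    {μ : Measure α} [NormedAddCommGroup E] {f : α → E} (hf : AEStronglyMeasurable f μ) :
    eLpNorm f 2 μ ^ 2 ≤ eLpNorm f ∞ μ * eLpNorm f 1 μ := by
  have hsq : eLpNorm f 2 μ ^ 2 = eLpNorm (fun x => ‖f x‖ * ‖f x‖) 1 μ := by
    have h := eLpNorm_norm_rpow (μ := μ) (p := 1) f (q := 2) two_pos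
    rw [one_mul, ENNReal.ofReal_ofNat, ENNReal.rpow_ofNat] at h
    rw [← h]
    simp only [Real.rpow_two, sq]
  calc eLpNorm f 2 μ ^ 2 = eLpNorm (fun x => ‖f x‖ * ‖f x‖) 1 μ := hsq
    _ ≤ (1 : NNReal) * eLpNorm f ∞ μ * eLpNorm f 1 μ :=
      eLpNorm_le_eLpNorm_top_mul_eLpNorm 1 f hf (fun u v => ‖u‖ * ‖v‖) 1
        (ae_of_all _ fun x => by simp)
    _ = eLpNorm f ∞ μ * eLpNorm f 1 μ := by rw [ENNReal.coe_one, one_mul]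

theorem ae_abs_le_nrm_top {f : ℝ → ℝ} (hf : eLpNorm f ⊤ volume ≠ ∞) :
    ∀ᵐ x, |f x| ≤ nrm f ⊤ := by
  filter_upwards [ae_le_eLpNormEssSup (f := f) (μ := volume)] with x hx
  rw [← eLpNorm_exponent_top] at hx
  simpa [nrm] using ENNReal.toReal_mono hf hx

theorem nrm_one_eq_integral_abs {f : ℝ → ℝ} (hf : Integrable f) : nrm f 1 = ∫ x, |f x| := by
  rw [nrm, eLpNorm_one_eq_lintegral_enorm, ← ofReal_integral_norm_eq_lintegral_enorm hf,
    ENNReal.toReal_ofReal (integral_nonneg fun _ => norm_nonneg _)]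
  simp only [Real.norm_eq_abs]

theorem sq_nrm_two_le_nrm_top_mul_nrm_one {f : ℝ → ℝ} (hf : AEStronglyMeasurable f)
    (htop : eLpNorm f ⊤ volume ≠ ∞) (hone : eLpNorm f 1 volume ≠ ∞) :
    nrm f 2 ^ 2 ≤ nrm f ⊤ * nrm f 1 := by
  rw [nrm, nrm, nrm, ← ENNReal.toReal_pow, ← ENNReal.toReal_mul]
  exact ENNReal.toReal_mono (ENNReal.mul_ne_top htop hone)
    (eLpNorm_two_sq_le_eLpNorm_top_mul_eLpNorm_one hf)

theorem integral_abs_sub_le_of_integral_eq {α : Type*} [MeasurableSpace α] {μ : Measure α}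
    {p q : α → ℝ} (hp : Integrable p μ) (hq : Integrable q μ) (hp0 : 0 ≤ᵐ[μ] p)
    (hq0 : 0 ≤ᵐ[μ] q) (hpq : ∫ x, p x ∂μ = ∫ x, q x ∂μ) {s : Set α} (hs : MeasurableSet s) :
    ∫ x, |p x - q x| ∂μ ≤ 2 * ∫ x in s, |p x - q x| ∂μ + 2 * ∫ x in sᶜ, q x ∂μ := by
  have habs : Integrable (fun x => |p x - q x|) μ := (hp.sub hq).abs
  have hout : ∫ x in sᶜ, |p x - q x| ∂μ ≤ ∫ x in sᶜ, p x ∂μ + ∫ x in sᶜ, q x ∂μ := by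
    rw [← integral_add hp.integrableOn hq.integrableOn]
    refine setIntegral_mono_ae habs.integrableOn (hp.add hq).integrableOn ?_
    filter_upwards [hp0, hq0] with x hpx hqx
    exact (abs_sub _ _).trans_eq (by rw [abs_of_nonneg hpx, abs_of_nonneg hqx])
  have hin : ∫ x in s, q x ∂μ - ∫ x in s, p x ∂μ ≤ ∫ x in s, |p x - q x| ∂μ := by
    rw [← integral_sub hq.integrableOn hp.integrableOn]
    refine setIntegral_mono (hq.sub hp).integrableOn habs.integrableOn fun x => ?_
    rw [abs_sub_comm]
    exact le_abs_self _
  linarith [integral_add_compl hs habs, integral_add_compl hs hp, integral_add_compl hs hq]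

theorem gauss_eq_gaussianPDFReal : gauss = ProbabilityTheory.gaussianPDFReal 0 1 := by
  ext x
  simp [gauss, ProbabilityTheory.gaussianPDFReal]

theorem gauss_nonneg (x : ℝ) : 0 ≤ gauss x :=
  gauss_eq_gaussianPDFReal ▸ ProbabilityTheory.gaussianPDFReal_nonneg 0 1 x

theorem integrable_gauss : Integrable gauss :=
  gauss_eq_gaussianPDFReal ▸ ProbabilityTheory.integrable_gaussianPDFReal 0 1

theorem integral_gauss : ∫ x, gauss x = 1 :=
  gauss_eq_gaussianPDFReal ▸ ProbabilityTheory.integral_gaussianPDFReal_eq_one 0 one_ne_zero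

theorem setIntegral_Ioi_gauss_le {T : ℝ} (hT : 1 ≤ T) :
    ∫ x in Ioi T, gauss x ≤ exp (-T ^ 2 / 2) := by
  have hT0 : 0 < T := one_pos.trans_le hT
  have hsqrt : 1 ≤ √(2 * π) := Real.one_le_sqrt.2 (by linarith [pi_gt_three])
  calc ∫ x in Ioi T, gauss x ≤ ∫ x in Ioi T, exp (T ^ 2 / 2) * exp (-T * x) := by
        refine setIntegral_mono_on integrable_gauss.integrableOn
          ((integrableOn_exp_mul_Ioi (neg_neg_of_pos hT0) T).const_mul _) measurableSet_Ioi
          fun x _ => ?_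
        -- completing the square: `-x²/2 = T²/2 - T x - (x - T)²/2`
        rw [gauss, ← exp_add]
        calc (√(2 * π))⁻¹ * exp (-x ^ 2 / 2) ≤ 1 * exp (-x ^ 2 / 2) := by
              gcongr; exact inv_le_one_of_one_le₀ hsqrt
          _ ≤ exp (T ^ 2 / 2 + -T * x) := by
              rw [one_mul]; exact exp_le_exp.2 (by nlinarith [sq_nonneg (x - T)])
    _ = exp (-T ^ 2 / 2) / T := by
        rw [integral_const_mul, integral_exp_mul_Ioi (neg_neg_of_pos hT0), neg_div_neg_eq,
          mul_div_assoc', ← exp_add]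
        ring_nf
    _ ≤ exp (-T ^ 2 / 2) := div_le_self (exp_nonneg _) hT

theorem setIntegral_compl_Icc_gauss_le {T : ℝ} (hT : 1 ≤ T) :
    ∫ x in (Icc (-T) T)ᶜ, gauss x ≤ 2 * exp (-T ^ 2 / 2) := by
  have hleft : ∫ x in Iio (-T), gauss x = ∫ x in Ioi T, gauss x := by
    rw [← integral_Iic_eq_integral_Iio, ← integral_comp_neg_Ioi]
    simp [gauss]
  have hcompl : (Icc (-T) T)ᶜ = Iio (-T) ∪ Ioi T := by
    ext x; simp only [mem_compl_iff, mem_Icc, mem_union, mem_Iio, mem_Ioi, not_and_or, not_le]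
  have hdisj : Disjoint (Iio (-T)) (Ioi T) :=
    (Iic_disjoint_Ioi (by linarith)).mono_left Iio_subset_Iic_self
  rw [hcompl, setIntegral_union hdisj measurableSet_Ioi integrable_gauss.integrableOn
    integrable_gauss.integrableOn, hleft]
  linarith [setIntegral_Ioi_gauss_le hT]

theorem integral_abs_sub_gauss_le {p : ℝ → ℝ} (hp : Integrable p) (hp0 : ∀ x, 0 ≤ p x)
    (hp1 : ∫ x, p x = 1) {ε T : ℝ} (hε : ∀ᵐ x, |p x - gauss x| ≤ ε) (hT : 1 ≤ T) :
    ∫ x, |p x - gauss x| ≤ 4 * T * ε + 4 * exp (-T ^ 2 / 2) := by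
  have hcore : ∫ x in Icc (-T) T, |p x - gauss x| ≤ ε * (2 * T) := by
    have h := norm_setIntegral_le_of_norm_le_const_ae (f := fun x => |p x - gauss x|)
      (s := Icc (-T) T) measure_Icc_lt_top
      (ae_restrict_of_ae (by simpa only [Real.norm_eq_abs, abs_abs] using hε))
    rw [Real.volume_real_Icc_of_le (by linarith), sub_neg_eq_add, ← two_mul] at h
    exact (Real.le_norm_self _).trans h
  have hsplit := integral_abs_sub_le_of_integral_eq hp integrable_gauss (ae_of_all _ hp0)
    (ae_of_all _ gauss_nonneg) (hp1.trans integral_gauss.symm)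
    (measurableSet_Icc (a := -T) (b := T))
  linarith [setIntegral_compl_Icc_gauss_le hT]

theorem integral_abs_sub_gauss_le_of_ae_abs_le {p : ℝ → ℝ} (hp : Integrable p)
    (hp0 : ∀ x, 0 ≤ p x) (hp1 : ∫ x, p x = 1) {ε : ℝ} (hε0 : 0 < ε) (hε : ε ≤ 1 / 2)
    (hpε : ∀ᵐ x, |p x - gauss x| ≤ ε) :
    ∫ x, |p x - gauss x| ≤ 16 * √|log ε| * ε := by
  set L := √|log ε|
  have hL0 : 0 ≤ L := sqrt_nonneg _
  have hL2 : L ^ 2 = -log ε := by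
    rw [sq_sqrt (abs_nonneg _), abs_of_neg (log_neg hε0 (by linarith))]
  have hlog2 : log 2 ≤ L ^ 2 := by
    rw [hL2, ← log_inv, ← one_div]
    exact log_le_log two_pos ((le_div_iff₀ hε0).2 (by linarith))
  have hL : 0.69 ≤ L ^ 2 := by linarith [log_two_gt_d9]
  set T := √2 * L
  have hT2 : T ^ 2 = 2 * L ^ 2 := by rw [mul_pow, sq_sqrt zero_le_two]
  have hT : 1 ≤ T := by nlinarith [mul_nonneg (sqrt_nonneg 2) hL0]
  have htail : exp (-T ^ 2 / 2) = ε := by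
    rw [hT2, hL2, neg_div, mul_div_cancel_left₀ _ two_ne_zero, neg_neg, exp_log hε0]
  have hsqrt2 : √2 ≤ 1.5 := by nlinarith [sq_sqrt zero_le_two, sqrt_nonneg 2]
  have hLT : T ≤ 1.5 * L := mul_le_mul_of_nonneg_right hsqrt2 hL0
  have hL1 : 1 ≤ 2.5 * L := by nlinarith
  calc ∫ x, |p x - gauss x| ≤ 4 * T * ε + 4 * exp (-T ^ 2 / 2) :=
        integral_abs_sub_gauss_le hp hp0 hp1 hpε hT
    _ ≤ 16 * L * ε := by rw [htail]; nlinarith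

/-- **Inequalities (2.27)–(2.28).** There is a universal constant `C > 0` such that for every
probability density `p` on `ℝ` with `0 < ‖p − φ‖_∞ ≤ 1/2`,
`‖p − φ‖₁ ≤ C √(|ln ‖p−φ‖_∞|) ‖p−φ‖_∞`, and consequently
`‖p − φ‖₂² ≤ ‖p−φ‖_∞ ‖p−φ‖₁ ≤ C √(|ln ‖p−φ‖_∞|) ‖p−φ‖_∞²`. -/
theorem L1_le_of_Linf :
    ∃ C : ℝ, 0 < C ∧
      ∀ p : ℝ → ℝ, Measurable p → (∀ x, 0 ≤ p x) → (∫ x, p x) = 1 →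
        0 < eLpNorm (fun x => p x - gauss x) ⊤ volume →
        eLpNorm (fun x => p x - gauss x) ⊤ volume ≤ 1 / 2 →
          nrm (fun x => p x - gauss x) 1 ≤
              C * Real.sqrt |Real.log (nrm (fun x => p x - gauss x) ⊤)| *
                nrm (fun x => p x - gauss x) ⊤ ∧
          (nrm (fun x => p x - gauss x) 2) ^ 2 ≤
              nrm (fun x => p x - gauss x) ⊤ * nrm (fun x => p x - gauss x) 1 ∧
          nrm (fun x => p x - gauss x) ⊤ * nrm (fun x => p x - gauss x) 1 ≤
              C * Real.sqrt |Real.log (nrm (fun x => p x - gauss x) ⊤)| *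
                (nrm (fun x => p x - gauss x) ⊤) ^ 2 := by
  refine ⟨16, by norm_num, fun p _ hp0 hp1 hpos hle => ?_⟩
  set f := fun x => p x - gauss x
  have hp : Integrable p := Integrable.of_integral_ne_zero (by rw [hp1]; exact one_ne_zero)
  have hf : Integrable f := hp.sub integrable_gauss
  have htop : eLpNorm f ⊤ volume ≠ ∞ := ne_top_of_le_ne_top (by norm_num) hle
  set ε := nrm f ⊤
  have hε0 : 0 < ε := ENNReal.toReal_pos hpos.ne' htop
  have hε : ε ≤ 1 / 2 := (ENNReal.toReal_mono (by norm_num) hle).trans_eq (by norm_num)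
  have hL1 : nrm f 1 ≤ 16 * √|log ε| * ε := by
    rw [nrm_one_eq_integral_abs hf]
    exact integral_abs_sub_gauss_le_of_ae_abs_le hp hp0 hp1 hε0 hε (ae_abs_le_nrm_top htop)
  have hL2 : nrm f 2 ^ 2 ≤ ε * nrm f 1 := sq_nrm_two_le_nrm_top_mul_nrm_one
    hf.aestronglyMeasurable htop (memLp_one_iff_integrable.2 hf).eLpNorm_ne_top
  refine ⟨hL1, hL2, ?_⟩
  calc ε * nrm f 1 ≤ ε * (16 * √|log ε| * ε) := mul_le_mul_of_nonneg_left hL1 hε0.le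
    _ = 16 * √|log ε| * ε ^ 2 := by ring
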